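/- Let A be a nonzero commutative ring and f1, f2 homogeneous in A[X1,X2] of degrees d1 ≤ d2 forming a regular sequence, δ = d1+d2−2. Define D(ν) for 0 ≤ ν ≤ d1−1 as the determinant of the (δ−ν+2)×(δ−ν+2) matrix whose first d2−ν columns are coefficient columns of X1^{d2−ν−1}f1,...,X2^{d2−ν−1}f1, next d1−ν columns are coefficient columns of f2-multiples, next ν+1 columns are coefficient columns of a generic form h of degree δ−2ν+1 with coefficients W, and whose last row is (0,...,0,X1^ν,...,X2^ν). Then m^{δ−ν+1} D(ν) ⊆ (f1, f2) in A[X1,X2,W], where m = (X1,X2); hence writing D(ν) = Σ_{|β|=ν} D_β(X1,X2) W^β, each D_β is an inertia form of f1, f2 of degree ν. -/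

import Mathlib

open MvPolynomial

noncomputable section

/-- The square matrix defining the inertia form `D(ν)` of Theorem `prop-cas3`:
its rows (except the last) are indexed by the monomials of degree `δ − ν + 1` in
`X1, X2`; the first `d2 − ν` columns contain the coefficients of
`X1^{d2−ν−1}f1, …, X2^{d2−ν−1}f1`, the next `d1 − ν` columns those of
`X1^{d1−ν−1}f2, …, X2^{d1−ν−1}f2`, and the last `ν + 1` columns those of
`X1^ν h, …, X2^ν h` for the generic form
`h = W0 X1^{δ−2ν+1} + ⋯ + W_{δ−2ν+1} X2^{δ−2ν+1}`; the last row is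
`(0, …, 0, X1^ν, …, X2^ν)`.  Entries live in `A[X1,X2][W0,…,W_{δ−2ν+1}]`, realized as
`MvPolynomial (Fin (d1+d2−2ν)) (MvPolynomial (Fin 2) A)`. -/
def Dmatrix {A : Type*} [CommRing A] (d1 d2 ν : ℕ)
    (hd1 : 2 ≤ d1) (hd12 : d1 ≤ d2) (hν : ν + 1 ≤ d1) (U V : ℕ → A) :
    Matrix (Fin (d1 + d2 - ν + 1)) (Fin (d1 + d2 - ν + 1))
      (MvPolynomial (Fin (d1 + d2 - 2 * ν)) (MvPolynomial (Fin 2) A)) :=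
  Matrix.of fun i j =>
    if (i : ℕ) < d1 + d2 - ν then
      if (j : ℕ) < d2 - ν then
        (if (j : ℕ) ≤ (i : ℕ) ∧ (i : ℕ) ≤ (j : ℕ) + d1 then
          C (C (U ((i : ℕ) - (j : ℕ)))) else 0)
      else if (j : ℕ) < (d2 - ν) + (d1 - ν) then
        (if (j : ℕ) - (d2 - ν) ≤ (i : ℕ) ∧ (i : ℕ) ≤ (j : ℕ) - (d2 - ν) + d2 then
          C (C (V ((i : ℕ) - ((j : ℕ) - (d2 - ν))))) else 0)
      else
        (if hc : (j : ℕ) - (d2 - ν) - (d1 - ν) ≤ (i : ℕ) ∧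
            (i : ℕ) ≤ (j : ℕ) - (d2 - ν) - (d1 - ν) + (d1 + d2 - 2 * ν - 1) then
          X ⟨(i : ℕ) - ((j : ℕ) - (d2 - ν) - (d1 - ν)), by omega⟩ else 0)
    else
      if (j : ℕ) < (d2 - ν) + (d1 - ν) then 0
      else
        C ((X 0 : MvPolynomial (Fin 2) A) ^ (ν - ((j : ℕ) - (d2 - ν) - (d1 - ν))) *
           (X 1 : MvPolynomial (Fin 2) A) ^ ((j : ℕ) - (d2 - ν) - (d1 - ν)))

/-!
Weighting the first `δ − ν + 2` rows of the matrix by the monomials `X1^{δ−ν+1−i} X2^i` and the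
last row by `−h` turns its rows into a combination whose entries are multiples of `f1` and `f2`:
each column of coefficients of `X1^a X2^b g` recombines to `X1^a X2^b g`, and in the `h`-columns
this cancels against the last row. Multiplying by the adjugate (Cramer's rule), every weight times
`D(ν)` lies in `(f1, f2)`, and the monomial weights generate `m^{δ−ν+1}`. Homogeneity comes from
the Laplace expansion along the last row, whose nonzero entries are the monomials
`X1^{ν−k} X2^k`: the complementary minors contain no `X` and exactly `ν` columns linear in `W`.
Reading off `W`-coefficients transfers the ideal membership to each `D_β`.
-/

open scoped Matrix

theorem Fin.sum_pow_mul_ite_shift {S : Type*} [CommSemiring S] (x y : S) (g : ℕ → S)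
    {a b d N : ℕ} (hN : a + b + d + 1 = N) :
    ∑ i : Fin N, x ^ (N - 1 - i) * y ^ (i : ℕ) *
        (if b ≤ (i : ℕ) ∧ (i : ℕ) ≤ b + d then g (i - b) else 0) =
      x ^ a * y ^ b * ∑ k ∈ Finset.range (d + 1), g k * x ^ (d - k) * y ^ k := by
  subst hN
  rw [Fin.sum_univ_eq_sum_range (fun i => x ^ (a + b + d + 1 - 1 - i) * y ^ i *
      (if b ≤ i ∧ i ≤ b + d then g (i - b) else 0)),
    show a + b + d + 1 = b + (d + 1 + a) by ring, Finset.sum_range_add, Finset.sum_range_add,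
    Finset.mul_sum]
  have hlow : ∀ i ∈ Finset.range b,
      x ^ (b + (d + 1 + a) - 1 - i) * y ^ i * (if b ≤ i ∧ i ≤ b + d then g (i - b) else 0) = 0 :=
    fun i hi => by rw [if_neg (by rw [Finset.mem_range] at hi; omega), mul_zero]
  have hhigh : ∀ i ∈ Finset.range a, x ^ (b + (d + 1 + a) - 1 - (b + (d + 1 + i))) *
      y ^ (b + (d + 1 + i)) * (if b ≤ b + (d + 1 + i) ∧ b + (d + 1 + i) ≤ b + d
        then g (b + (d + 1 + i) - b) else 0) = 0 :=
    fun i _ => by rw [if_neg (by omega), mul_zero]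
  rw [Finset.sum_eq_zero hlow, Finset.sum_eq_zero hhigh, zero_add, add_zero]
  refine Finset.sum_congr rfl fun k hk => ?_
  rw [Finset.mem_range] at hk
  rw [if_pos (by omega), Nat.add_sub_cancel_left,
    show b + (d + 1 + a) - 1 - (b + k) = a + (d - k) by omega, pow_add, pow_add]
  ring

theorem Matrix.mul_det_mem_of_vecMul_mem {R n : Type*} [CommRing R] [Fintype n]
    [DecidableEq n] {I : Ideal R} (M : Matrix n n R) (w : n → R) (h : ∀ j, (w ᵥ* M) j ∈ I) (i : n) :
    w i * M.det ∈ I := by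
  have hadj : (w ᵥ* M) ᵥ* M.adjugate = M.det • w := by
    rw [Matrix.vecMul_vecMul, Matrix.mul_adjugate, Matrix.vecMul_smul, Matrix.vecMul_one]
  rw [mul_comm, ← smul_eq_mul, ← Pi.smul_apply, ← hadj]
  exact Ideal.sum_mem _ fun j _ => I.mul_mem_right _ (h j)

theorem Ideal.span_pair_pow_le {R : Type*} [CommRing R] {x y : R} (n : ℕ) {J : Ideal R}
    (h : ∀ a b, a + b = n → x ^ a * y ^ b ∈ J) : Ideal.span {x, y} ^ n ≤ J := by
  induction n generalizing J with
  | zero => simpa [Ideal.one_eq_top, Ideal.eq_top_iff_one] using h 0 0 rfl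
  | succ n ih =>
    have hcolon : ∀ z, (∀ a b, a + b = n → x ^ a * y ^ b * z ∈ J) →
        ∀ t ∈ Ideal.span {x, y} ^ n, z * t ∈ J := fun z hz t ht => by
      have := ih (J := J.colon {z}) (fun a b hab => Submodule.mem_colon_singleton.mpr
        (by simpa [smul_eq_mul] using hz a b hab)) ht
      simpa [Submodule.mem_colon_singleton, mul_comm] using this
    rw [pow_succ']
    nth_rewrite 1 [Ideal.span_insert]
    rw [Ideal.sup_mul, sup_le_iff,
      Ideal.span_singleton_mul_le_iff, Ideal.span_singleton_mul_le_iff]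
    constructor
    · exact hcolon x fun a b hab => by
        simpa [pow_succ, mul_comm, mul_left_comm, mul_assoc] using h (a + 1) b (by omega)
    · exact hcolon y fun a b hab => by
        simpa [pow_succ, mul_comm, mul_left_comm, mul_assoc] using h a (b + 1) (by omega)

theorem Matrix.isHomogeneous_det_of_column {σ R n : Type*} [CommRing R] [Fintype n]
    [DecidableEq n] (M : Matrix n n (MvPolynomial σ R)) (c : n → ℕ)
    (h : ∀ i j, (M i j).IsHomogeneous (c j)) : M.det.IsHomogeneous (∑ j, c j) := by
  rw [Matrix.det_apply]
  refine IsHomogeneous.sum _ _ _ fun τ _ => ?_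
  rw [Units.smul_def]
  exact zsmul_mem (K := homogeneousSubmodule σ R _)
    (IsHomogeneous.prod _ _ _ fun j _ => h _ j) _

theorem Matrix.det_mem_range_of_mem_range {R S n : Type*} [CommRing R] [CommRing S]
    [Fintype n] [DecidableEq n] (f : R →+* S) (M : Matrix n n S) (h : ∀ i j, M i j ∈ f.range) :
    M.det ∈ f.range := by
  choose N hN using h
  exact ⟨(Matrix.of N).det, by rw [RingHom.map_det]; congr; ext i j; exact hN i j⟩

theorem MvPolynomial.mul_coeff_mem_of_C_mul_mem {σ R : Type*} [CommRing R] {J K : Ideal R}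
    {P : MvPolynomial σ R} (h : ∀ G ∈ J.map (C : R →+* MvPolynomial σ R), G * P ∈ K.map C)
    (β : σ →₀ ℕ) : ∀ g ∈ J, g * coeff β P ∈ K := fun g hg => by
  rw [← coeff_C_mul]
  exact mem_map_C_iff.mp (h _ (Ideal.mem_map_of_mem _ hg)) β

theorem Fin.sum_ite_le (m p : ℕ) :
    ∑ j : Fin m, (if p ≤ (j : ℕ) then 1 else 0) = m - p := by
  rw [Fin.sum_univ_eq_sum_range (fun j => if p ≤ j then 1 else 0), Finset.sum_boole,
    Finset.range_eq_Ico, Finset.Ico_filter_le]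
  simp

theorem MvPolynomial.C_sum_C_mul_X_pow_mul_X_pow {σ A : Type*} [CommRing A] (d : ℕ)
    (U : ℕ → A) :
    (C (∑ i ∈ Finset.range (d + 1), C (U i) * X 0 ^ (d - i) * X 1 ^ i) :
        MvPolynomial σ (MvPolynomial (Fin 2) A)) =
      ∑ k ∈ Finset.range (d + 1), C (C (U k)) * C (X 0) ^ (d - k) * C (X 1) ^ k := by
  simp [map_sum]

def genericCoeff (A : Type*) [CommRing A] (n k : ℕ) :
    MvPolynomial (Fin n) (MvPolynomial (Fin 2) A) :=
  if hk : k < n then X ⟨k, hk⟩ else 0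

theorem genericCoeff_of_lt (A : Type*) [CommRing A] {n k : ℕ} (hk : k < n) :
    genericCoeff A n k = X ⟨k, hk⟩ :=
  dif_pos hk

def genericForm (A : Type*) [CommRing A] (n : ℕ) :
    MvPolynomial (Fin n) (MvPolynomial (Fin 2) A) :=
  ∑ k ∈ Finset.range n, genericCoeff A n k * C (X 0) ^ (n - 1 - k) * C (X 1) ^ k

def Dweights (A : Type*) [CommRing A] (d1 d2 ν : ℕ) :
    Fin (d1 + d2 - ν + 1) → MvPolynomial (Fin (d1 + d2 - 2 * ν)) (MvPolynomial (Fin 2) A) :=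
  Fin.snoc (fun i : Fin (d1 + d2 - ν) => C (X 0) ^ (d1 + d2 - ν - 1 - i) * C (X 1) ^ (i : ℕ))
    (-genericForm A (d1 + d2 - 2 * ν))

section Dmatrix

variable {A : Type*} [CommRing A] {d1 d2 ν : ℕ} {hd1 : 2 ≤ d1} {hd12 : d1 ≤ d2}
  {hν : ν + 1 ≤ d1} {U V : ℕ → A}

theorem Dmatrix_last_of_lt {j : Fin (d1 + d2 - ν + 1)} (hj : (j : ℕ) < d2 - ν + (d1 - ν)) :
    Dmatrix d1 d2 ν hd1 hd12 hν U V (Fin.last _) j = 0 := by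
  simp [Dmatrix, hj]

theorem Dmatrix_last_of_le {j : Fin (d1 + d2 - ν + 1)} (hj : d2 - ν + (d1 - ν) ≤ (j : ℕ)) :
    Dmatrix d1 d2 ν hd1 hd12 hν U V (Fin.last _) j =
      C (X 0 ^ (ν - (j - (d2 - ν) - (d1 - ν))) * X 1 ^ ((j : ℕ) - (d2 - ν) - (d1 - ν))) := by
  simp [Dmatrix, not_lt.mpr hj]

theorem Dmatrix_castSucc_isHomogeneous (i : Fin (d1 + d2 - ν)) (j : Fin (d1 + d2 - ν + 1)) :
    (Dmatrix d1 d2 ν hd1 hd12 hν U V i.castSucc j).IsHomogeneous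
      (if d2 - ν + (d1 - ν) ≤ (j : ℕ) then 1 else 0) := by
  simp only [Dmatrix, Matrix.of_apply, Fin.val_castSucc, i.isLt, if_true]
  split_ifs <;> first
    | exact isHomogeneous_C _ _
    | exact isHomogeneous_X _ _
    | exact isHomogeneous_zero _ _ _
    | omega

theorem Dmatrix_castSucc_mem_range (i : Fin (d1 + d2 - ν)) (j : Fin (d1 + d2 - ν + 1)) :
    Dmatrix d1 d2 ν hd1 hd12 hν U V i.castSucc j ∈
      (MvPolynomial.map (C : A →+* MvPolynomial (Fin 2) A)).range := by
  simp only [Dmatrix, Matrix.of_apply, Fin.val_castSucc, i.isLt, if_true]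
  split_ifs <;> first
    | exact ⟨C _, map_C _ _⟩
    | exact ⟨X _, map_X _ _⟩
    | exact zero_mem _

theorem Dweights_vecMul_Dmatrix_mem {f1 f2 : MvPolynomial (Fin 2) A}
    (hf1 : f1 = ∑ i ∈ Finset.range (d1 + 1), C (U i) * X 0 ^ (d1 - i) * X 1 ^ i)
    (hf2 : f2 = ∑ i ∈ Finset.range (d2 + 1), C (V i) * X 0 ^ (d2 - i) * X 1 ^ i)
    (j : Fin (d1 + d2 - ν + 1)) :
    (Dweights A d1 d2 ν ᵥ* Dmatrix d1 d2 ν hd1 hd12 hν U V) j ∈ Ideal.span {C f1, C f2} := by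
  rw [Matrix.vecMul, dotProduct, Fin.sum_univ_castSucc]
  simp only [Dweights, Fin.snoc_castSucc, Fin.snoc_last]
  rcases lt_or_ge (j : ℕ) (d2 - ν) with hj1 | hj1
  · rw [Dmatrix_last_of_lt (by omega), mul_zero, add_zero]
    simp only [Dmatrix, Matrix.of_apply, Fin.val_castSucc, Fin.is_lt, if_true, hj1]
    rw [Fin.sum_pow_mul_ite_shift _ _ (fun k => C (C (U k)))
        (show d2 - ν - 1 - j + j + d1 + 1 = d1 + d2 - ν by omega),
      ← C_sum_C_mul_X_pow_mul_X_pow, ← hf1]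
    exact Ideal.mul_mem_left _ _ (Ideal.subset_span (by simp))
  rcases lt_or_ge (j : ℕ) (d2 - ν + (d1 - ν)) with hj2 | hj2
  · rw [Dmatrix_last_of_lt hj2, mul_zero, add_zero]
    simp only [Dmatrix, Matrix.of_apply, Fin.val_castSucc, Fin.is_lt, if_true, hj2,
      not_lt.mpr hj1, if_false]
    rw [Fin.sum_pow_mul_ite_shift _ _ (fun k => C (C (V k)))
        (show d1 - ν - 1 - (j - (d2 - ν)) + (j - (d2 - ν)) + d2 + 1 = d1 + d2 - ν by omega),
      ← C_sum_C_mul_X_pow_mul_X_pow, ← hf2]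
    exact Ideal.mul_mem_left _ _ (Ideal.subset_span (by simp))
  · rw [Dmatrix_last_of_le hj2]
    simp only [Dmatrix, Matrix.of_apply, Fin.val_castSucc, Fin.is_lt, if_true,
      not_lt.mpr hj1, not_lt.mpr hj2, if_false]
    simp only [← genericCoeff_of_lt A, dite_eq_ite]
    rw [Fin.sum_pow_mul_ite_shift _ _ (genericCoeff A (d1 + d2 - 2 * ν))
        (show ν - (j - (d2 - ν) - (d1 - ν)) + (j - (d2 - ν) - (d1 - ν)) + (d1 + d2 - 2 * ν - 1)
          + 1 = d1 + d2 - ν by omega),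
      Nat.sub_add_cancel (show 1 ≤ d1 + d2 - 2 * ν by omega), ← genericForm]
    simp only [map_mul, map_pow]
    convert Submodule.zero_mem _ using 1
    ring

theorem Dmatrix_det_mem {f1 f2 : MvPolynomial (Fin 2) A}
    (hf1 : f1 = ∑ i ∈ Finset.range (d1 + 1), C (U i) * X 0 ^ (d1 - i) * X 1 ^ i)
    (hf2 : f2 = ∑ i ∈ Finset.range (d2 + 1), C (V i) * X 0 ^ (d2 - i) * X 1 ^ i) :
    ∀ g ∈ (Ideal.span
        {(C (X 0) : MvPolynomial (Fin (d1 + d2 - 2 * ν)) (MvPolynomial (Fin 2) A)),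
         C (X 1)}) ^ (d1 + d2 - ν - 1),
      g * (Dmatrix d1 d2 ν hd1 hd12 hν U V).det ∈ Ideal.span {C f1, C f2} := by
  intro g hg
  refine Submodule.mem_colon_singleton.mp (Ideal.span_pair_pow_le _ (fun a b hab => ?_) hg)
  have hrow := (Dmatrix d1 d2 ν hd1 hd12 hν U V).mul_det_mem_of_vecMul_mem _
    (Dweights_vecMul_Dmatrix_mem hf1 hf2) (Fin.castSucc ⟨b, by omega⟩)
  rw [Dweights, Fin.snoc_castSucc, show d1 + d2 - ν - 1 - b = a by omega] at hrow
  exact Submodule.mem_colon_singleton.mpr hrow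

theorem Dmatrix_det_isHomogeneous : (Dmatrix d1 d2 ν hd1 hd12 hν U V).det.IsHomogeneous ν := by
  rw [Matrix.det_succ_row _ (Fin.last _)]
  refine IsHomogeneous.sum _ _ _ fun j _ => ?_
  rcases lt_or_ge (j : ℕ) (d2 - ν + (d1 - ν)) with hj | hj
  · rw [Dmatrix_last_of_lt hj, mul_zero, zero_mul]
    exact isHomogeneous_zero _ _ _
  have hcount : ∑ j', (if d2 - ν + (d1 - ν) ≤ (j.succAbove j' : ℕ) then 1 else 0) = ν := by
    have := Fin.sum_univ_succAbove (fun j' : Fin (d1 + d2 - ν + 1) =>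
      if d2 - ν + (d1 - ν) ≤ (j' : ℕ) then 1 else 0) j
    rw [Fin.sum_ite_le, if_pos hj] at this
    omega
  have hminor := Matrix.isHomogeneous_det_of_column
    ((Dmatrix d1 d2 ν hd1 hd12 hν U V).submatrix (Fin.last _).succAbove j.succAbove)
    (fun j' => if d2 - ν + (d1 - ν) ≤ (j.succAbove j' : ℕ) then 1 else 0)
    (fun i j' => by
      simpa only [Matrix.submatrix_apply, Fin.succAbove_last] using
        Dmatrix_castSucc_isHomogeneous i (j.succAbove j'))
  rw [hcount] at hminor
  rw [Dmatrix_last_of_le hj, ← map_one C, ← map_neg C, ← map_pow, ← map_mul]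
  simpa only [zero_add] using (isHomogeneous_C _ _).mul hminor

theorem Dmatrix_coeff_det_isHomogeneous (β : Fin (d1 + d2 - 2 * ν) →₀ ℕ) :
    (coeff β (Dmatrix d1 d2 ν hd1 hd12 hν U V).det).IsHomogeneous ν := by
  rw [Matrix.det_succ_row _ (Fin.last _), coeff_sum]
  refine IsHomogeneous.sum _ _ _ fun j _ => ?_
  rcases lt_or_ge (j : ℕ) (d2 - ν + (d1 - ν)) with hj | hj
  · rw [Dmatrix_last_of_lt hj, mul_zero, zero_mul, coeff_zero]
    exact isHomogeneous_zero _ _ _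
  obtain ⟨P, hP⟩ := Matrix.det_mem_range_of_mem_range _
    ((Dmatrix d1 d2 ν hd1 hd12 hν U V).submatrix (Fin.last _).succAbove j.succAbove)
    (fun i j' => by simpa using Dmatrix_castSucc_mem_range i _)
  have hmon := (isHomogeneous_X_pow (R := A) (0 : Fin 2) (ν - (j - (d2 - ν) - (d1 - ν)))).mul
    (isHomogeneous_X_pow (1 : Fin 2) ((j : ℕ) - (d2 - ν) - (d1 - ν)))
  rw [show ν - (j - (d2 - ν) - (d1 - ν)) + (j - (d2 - ν) - (d1 - ν)) = ν by omega] at hmon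
  rw [Dmatrix_last_of_le hj, ← hP, ← map_one C, ← map_neg C, ← map_pow, ← map_mul,
    coeff_C_mul, coeff_map]
  simpa using (((isHomogeneous_one _ _).neg.pow _).mul hmon).mul (isHomogeneous_C _ _)

end Dmatrix

theorem stmt14_general {A : Type*} [CommRing A] (d1 d2 ν : ℕ)
    (hd1 : 2 ≤ d1) (hd12 : d1 ≤ d2) (hν : ν + 1 ≤ d1) (U V : ℕ → A)
    (f1 f2 : MvPolynomial (Fin 2) A)
    (hf1 : f1 = ∑ i ∈ Finset.range (d1 + 1), C (U i) * X 0 ^ (d1 - i) * X 1 ^ i)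
    (hf2 : f2 = ∑ i ∈ Finset.range (d2 + 1), C (V i) * X 0 ^ (d2 - i) * X 1 ^ i) :
    (∀ g ∈ (Ideal.span
        {(C (X 0) : MvPolynomial (Fin (d1 + d2 - 2 * ν)) (MvPolynomial (Fin 2) A)),
         C (X 1)}) ^ (d1 + d2 - ν - 1),
      g * (Dmatrix d1 d2 ν hd1 hd12 hν U V).det ∈ Ideal.span {C f1, C f2}) ∧
    (Dmatrix d1 d2 ν hd1 hd12 hν U V).det.IsHomogeneous ν ∧
    ∀ β : Fin (d1 + d2 - 2 * ν) →₀ ℕ,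
      (coeff β (Dmatrix d1 d2 ν hd1 hd12 hν U V).det).IsHomogeneous ν ∧
      ∃ k : ℕ, ∀ g ∈ (Ideal.span {(X 0 : MvPolynomial (Fin 2) A), X 1}) ^ k,
        g * coeff β (Dmatrix d1 d2 ν hd1 hd12 hν U V).det ∈ Ideal.span {f1, f2} := by
  have hspan : ∀ a b : MvPolynomial (Fin 2) A,
      (Ideal.span {C a, C b} : Ideal (MvPolynomial (Fin (d1 + d2 - 2 * ν)) _)) =
        (Ideal.span {a, b}).map C := fun a b => by
    rw [Ideal.map_span, Set.image_pair]
  have hdet := Dmatrix_det_mem (hd1 := hd1) (hd12 := hd12) (hν := hν) hf1 hf2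
  refine ⟨hdet, Dmatrix_det_isHomogeneous, fun β =>
    ⟨Dmatrix_coeff_det_isHomogeneous β, d1 + d2 - ν - 1, ?_⟩⟩
  refine mul_coeff_mem_of_C_mul_mem (fun G hG => ?_) β
  rw [Ideal.map_pow, ← hspan] at hG
  rw [← hspan]
  exact hdet G hG

/-- Let `f1 = Σ U_i X1^{d1−i}X2^i`, `f2 = Σ V_i X1^{d2−i}X2^i` be
homogeneous of degrees `2 ≤ d1 ≤ d2` forming a regular sequence, `δ = d1+d2−2` and
`0 ≤ ν ≤ d1 − 1`.  With `D(ν)` the determinant of the matrix `Dmatrix` above,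
`m^{δ−ν+1} · D(ν) ⊆ (f1, f2)` in `A[X1,X2][W]`, where `m = (X1,X2)` — and moreover
`D(ν)` is homogeneous of degree `ν` in `W`, and writing `D(ν) = Σ_β D_β(X1,X2) W^β`,
each coefficient `D_β` is an inertia form of `f1, f2` of degree `ν` (homogeneous of
degree `ν` and annihilated modulo `(f1,f2)` by a power of `m`). -/
theorem stmt14 {A : Type*} [CommRing A] [Nontrivial A] (d1 d2 ν : ℕ)
    (hd1 : 2 ≤ d1) (hd12 : d1 ≤ d2) (hν : ν + 1 ≤ d1) (U V : ℕ → A)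
    (f1 f2 : MvPolynomial (Fin 2) A)
    (hf1 : f1 = ∑ i ∈ Finset.range (d1 + 1), C (U i) * X 0 ^ (d1 - i) * X 1 ^ i)
    (hf2 : f2 = ∑ i ∈ Finset.range (d2 + 1), C (V i) * X 0 ^ (d2 - i) * X 1 ^ i)
    (hreg : RingTheory.Sequence.IsRegular (MvPolynomial (Fin 2) A) [f1, f2]) :
    (∀ g ∈ (Ideal.span
        {(C (X 0) : MvPolynomial (Fin (d1 + d2 - 2 * ν)) (MvPolynomial (Fin 2) A)),
         C (X 1)}) ^ (d1 + d2 - ν - 1),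
      g * (Dmatrix d1 d2 ν hd1 hd12 hν U V).det ∈ Ideal.span {C f1, C f2}) ∧
    (Dmatrix d1 d2 ν hd1 hd12 hν U V).det.IsHomogeneous ν ∧
    ∀ β : Fin (d1 + d2 - 2 * ν) →₀ ℕ,
      (coeff β (Dmatrix d1 d2 ν hd1 hd12 hν U V).det).IsHomogeneous ν ∧
      ∃ k : ℕ, ∀ g ∈ (Ideal.span {(X 0 : MvPolynomial (Fin 2) A), X 1}) ^ k,
        g * coeff β (Dmatrix d1 d2 ν hd1 hd12 hν U V).det ∈ Ideal.span {f1, f2} :=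
  stmt14_general d1 d2 ν hd1 hd12 hν U V f1 f2 hf1 hf2

end
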